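/- arXiv:1303.4289 — 2 statements merged into one kernel-verified Lean document; each statement's English description precedes it below -/
import Mathlib

section
/- Fix ρ > 0. Then the MVU filter is strictly better than the MMSE filter for the zeroth-order symbol-estimate MSE with random channel: M_rc(f_MVU) < M_rc(f_MMSE), where f_MVU = x/‖x‖² and f_MMSE = ρ·x/(ρ‖x‖² + σw²). -/
open MeasureTheory

/-- `φ(f) = fᴴ x = Σᵢ conj(fᵢ)·xᵢ`. -/
noncomputable def phi {B : ℕ} (x f : Fin B → ℂ) : ℂ :=
  ∑ i, (starRingEnd ℂ) (f i) * x i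

/-- Squared Euclidean norm `‖f‖² = Σᵢ |fᵢ|²`. -/
noncomputable def nsq {B : ℕ} (f : Fin B → ℂ) : ℝ :=
  ∑ i, Complex.normSq (f i)

/-- Zeroth-order symbol-estimate MSE of the ZF equalizer, random channel with
prior second moment `ρ = E[|h|²]`. -/
noncomputable def Mrc {B : ℕ} (σx2 σw2 ρ : ℝ) (x f : Fin B → ℂ) : ℝ :=
  (σx2 * (ρ * Complex.normSq (phi x f - 1) + σw2 * nsq f) + σw2) /
    (ρ * Complex.normSq (phi x f) + σw2 * nsq f)

/-- The MVU channel-estimating filter `f_MVU = x / ‖x‖²`. -/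
noncomputable def fMVU {B : ℕ} (x : Fin B → ℂ) : Fin B → ℂ :=
  fun i => x i / (nsq x : ℂ)

/-- The MMSE channel-estimating filter `f_MMSE = ρ·x / (ρ‖x‖² + σw²)`. -/
noncomputable def fMMSE {B : ℕ} (σw2 ρ : ℝ) (x : Fin B → ℂ) : Fin B → ℂ :=
  fun i => (ρ : ℂ) * x i / ((ρ * nsq x + σw2 : ℝ) : ℂ)

/-! Both filters are real multiples `c • x` of the training vector, and along that ray `M_rc`
has a closed form in `c` and `X = ‖x‖²`. Writing `D = ρX + σw²`, it evaluates to
`σw² (σx² + X) / D` for the MVU filter and to `σw² (ρσx² + D) / (ρ²X)` for the MMSE filter; clearing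
denominators, the comparison reduces to `ρ²X² < ρσx²σw² + D²`, which holds since `D > ρX`. -/

lemma nsq_pos {B : ℕ} {x : Fin B → ℂ} (hx : x ≠ 0) : 0 < nsq x := by
  obtain ⟨i, hi⟩ := Function.ne_iff.mp hx
  exact Finset.sum_pos' (fun j _ => Complex.normSq_nonneg _)
    ⟨i, Finset.mem_univ i, Complex.normSq_pos.mpr hi⟩

lemma phi_ofReal_mul {B : ℕ} (x : Fin B → ℂ) (c : ℝ) :
    phi x (fun i => (c : ℂ) * x i) = ((c * nsq x : ℝ) : ℂ) := by
  simp only [phi, nsq, map_mul, Complex.conj_ofReal, mul_assoc, ← Finset.mul_sum,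
    ← Complex.normSq_eq_conj_mul_self]
  push_cast
  rfl

lemma nsq_ofReal_mul {B : ℕ} (x : Fin B → ℂ) (c : ℝ) :
    nsq (fun i => (c : ℂ) * x i) = c ^ 2 * nsq x := by
  simp only [nsq, Complex.normSq_mul, Complex.normSq_ofReal, ← Finset.mul_sum]
  ring

lemma Mrc_ofReal_mul {B : ℕ} (σx2 σw2 ρ : ℝ) (x : Fin B → ℂ) (c : ℝ) :
    Mrc σx2 σw2 ρ x (fun i => (c : ℂ) * x i) =
      (σx2 * (ρ * (c * nsq x - 1) ^ 2 + σw2 * (c ^ 2 * nsq x)) + σw2) /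
        (ρ * (c * nsq x) ^ 2 + σw2 * (c ^ 2 * nsq x)) := by
  rw [Mrc, phi_ofReal_mul, nsq_ofReal_mul, ← Complex.ofReal_one, ← Complex.ofReal_sub,
    Complex.normSq_ofReal, Complex.normSq_ofReal]
  ring

lemma fMVU_eq {B : ℕ} (x : Fin B → ℂ) : fMVU x = fun i => (((nsq x)⁻¹ : ℝ) : ℂ) * x i := by
  funext i
  rw [fMVU, Complex.ofReal_inv, div_eq_inv_mul]

lemma fMMSE_eq {B : ℕ} (σw2 ρ : ℝ) (x : Fin B → ℂ) :
    fMMSE σw2 ρ x = fun i => ((ρ / (ρ * nsq x + σw2) : ℝ) : ℂ) * x i := by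
  funext i
  rw [fMMSE, Complex.ofReal_div]
  ring

lemma Mrc_fMVU {B : ℕ} (σx2 σw2 ρ : ℝ) {x : Fin B → ℂ} (hx : x ≠ 0) :
    Mrc σx2 σw2 ρ x (fMVU x) = σw2 * (σx2 + nsq x) / (ρ * nsq x + σw2) := by
  have hX := (nsq_pos hx).ne'
  rw [fMVU_eq, Mrc_ofReal_mul, inv_mul_cancel₀ hX]
  field_simp
  ring

lemma Mrc_fMMSE {B : ℕ} (σx2 σw2 : ℝ) {ρ : ℝ} (hρ : ρ ≠ 0) {x : Fin B → ℂ} (hx : x ≠ 0)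
    (hD : ρ * nsq x + σw2 ≠ 0) :
    Mrc σx2 σw2 ρ x (fMMSE σw2 ρ x) =
      σw2 * (σx2 * ρ + (ρ * nsq x + σw2)) / (ρ ^ 2 * nsq x) := by
  have hX := (nsq_pos hx).ne'
  have hsub : ρ / (ρ * nsq x + σw2) * nsq x - 1 = -σw2 / (ρ * nsq x + σw2) := by
    field_simp
    ring
  rw [fMMSE_eq, Mrc_ofReal_mul, hsub]
  field_simp
  ring

theorem mvu_strictly_better_than_mmse_rc_mse_general
    (B : ℕ) (x : Fin B → ℂ) (hx : x ≠ 0)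
    (σx2 σw2 : ℝ) (hσx : 0 < σx2) (hσw : 0 < σw2)
    (ρ : ℝ) (hρ : 0 < ρ) :
    Mrc σx2 σw2 ρ x (fMVU x) < Mrc σx2 σw2 ρ x (fMMSE σw2 ρ x) := by
  set X := nsq x
  have hX : 0 < X := nsq_pos hx
  set D := ρ * X + σw2
  have hD : 0 < D := by positivity
  rw [Mrc_fMVU _ _ _ hx, Mrc_fMMSE _ _ hρ.ne' hx hD.ne', div_lt_div_iff₀ hD (by positivity),
    mul_assoc, mul_assoc]
  refine mul_lt_mul_of_pos_left ?_ hσw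
  have gap : (σx2 * ρ + D) * D - (σx2 + X) * (ρ ^ 2 * X) = σw2 * (σx2 * ρ + 2 * ρ * X + σw2) := by
    ring
  linarith [show 0 < σw2 * (σx2 * ρ + 2 * ρ * X + σw2) by positivity]

/-- The MVU filter is strictly better than the MMSE filter for the zeroth-order
symbol-estimate MSE with random channel. -/
theorem mvu_strictly_better_than_mmse_rc_mse
    (B : ℕ) (hB : 1 ≤ B) (x : Fin B → ℂ) (hx : x ≠ 0)
    (σx2 σw2 : ℝ) (hσx : 0 < σx2) (hσw : 0 < σw2)
    (ρ : ℝ) (hρ : 0 < ρ) :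
    Mrc σx2 σw2 ρ x (fMVU x) < Mrc σx2 σw2 ρ x (fMMSE σw2 ρ x) :=
  mvu_strictly_better_than_mmse_rc_mse_general B x hx σx2 σw2 hσx hσw ρ hρ
end

section
/- Fix constants a > 0, b > 0, a nonzero filter f ∈ ℂ^B, and let μ be a probability measure on ℂ whose second moment ∫ |h|² dμ(h) is finite. Then the averaged zeroth-order error probability admits the bound ∫ a·Q(b·√(σx²/M_dc(f, h))) dμ(h) ≤ (a/(b·√(σx²)·√(2π))) · √( ∫ M_dc(f, h) dμ(h) ). (The upper bound on the average [P_e]_0 obtained by combining the Gaussian tail bound Q(u) < e^{−u²/2}/(u√(2π)) with Jensen's inequality for the concave square root.) -/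
/-!
The Mills-ratio bound `Q(u) ≤ e^{-u²/2} / (u √(2π)) ≤ 1 / (u √(2π))` turns the integrand into
at most `a / (b √σx² √(2π)) · √M_dc(f, h)`, which is integrable because `M_dc(f, h)` is bounded
by an affine function of `|h|²`. Jensen's inequality for the concave square root then gives
`∫ √M_dc dμ ≤ √(∫ M_dc dμ)` for the probability measure `μ`.
-/

open MeasureTheory

/-- Zeroth-order symbol-estimate MSE of the ZF equalizer for channel `h`. -/
noncomputable def Mdc {B : ℕ} (σx2 σw2 : ℝ) (h : ℂ) (x f : Fin B → ℂ) : ℝ :=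
  (σx2 * (Complex.normSq h * Complex.normSq (phi x f - 1) + σw2 * nsq f) + σw2) /
    (Complex.normSq h * Complex.normSq (phi x f) + σw2 * nsq f)

/-- Standard Gaussian tail function `Q(u) = (1/√(2π)) ∫_u^∞ e^{−t²/2} dt`. -/
noncomputable def Qfun (u : ℝ) : ℝ :=
  (Real.sqrt (2 * Real.pi))⁻¹ * ∫ t in Set.Ioi u, Real.exp (-t ^ 2 / 2)

open Real Set Filter Topology

lemma hasDerivAt_neg_exp_neg_sq_div_two (t : ℝ) :
    HasDerivAt (fun s : ℝ => -exp (-s ^ 2 / 2)) (t * exp (-t ^ 2 / 2)) t := by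
  have h : HasDerivAt (fun s : ℝ => -s ^ 2 / 2) (-t) t := by
    simpa using ((hasDerivAt_pow 2 t).neg.div_const 2).congr_deriv (by ring)
  exact h.exp.neg.congr_deriv (by ring)

lemma tendsto_neg_exp_neg_sq_div_two_atTop :
    Tendsto (fun s : ℝ => -exp (-s ^ 2 / 2)) atTop (𝓝 0) := by
  have h : Tendsto (fun s : ℝ => -s ^ 2 / 2) atTop atBot :=
    (tendsto_neg_atBot_iff.mpr (tendsto_pow_atTop two_ne_zero)).atBot_div_const two_pos
  simpa using (tendsto_exp_atBot.comp h).neg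

lemma integrableOn_exp_neg_sq_div_two (s : Set ℝ) :
    IntegrableOn (fun t : ℝ => exp (-t ^ 2 / 2)) s :=
  ((integrable_exp_neg_mul_sq (by norm_num : (0 : ℝ) < 1 / 2)).congr
    (.of_forall fun t => by ring_nf)).integrableOn

lemma integral_Ioi_mul_exp_neg_sq_div_two {u : ℝ} (hu : 0 ≤ u) :
    ∫ t in Ioi u, t * exp (-t ^ 2 / 2) = exp (-u ^ 2 / 2) := by
  simpa using integral_Ioi_of_hasDerivAt_of_nonneg'
    (fun t _ => hasDerivAt_neg_exp_neg_sq_div_two t)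
    (fun t ht => mul_nonneg (hu.trans ht.le) (exp_pos _).le)
    tendsto_neg_exp_neg_sq_div_two_atTop

lemma integrableOn_Ioi_mul_exp_neg_sq_div_two {u : ℝ} (hu : 0 ≤ u) :
    IntegrableOn (fun t : ℝ => t * exp (-t ^ 2 / 2)) (Ioi u) :=
  integrableOn_Ioi_deriv_of_nonneg' (fun t _ => hasDerivAt_neg_exp_neg_sq_div_two t)
    (fun _ ht => mul_nonneg (hu.trans ht.le) (exp_pos _).le)
    tendsto_neg_exp_neg_sq_div_two_atTop

-- On `(u, ∞)` the weight `t / u` is at least `1`, and `t e^{-t²/2}` integrates in closed form.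
lemma integral_Ioi_exp_neg_sq_div_two_le {u : ℝ} (hu : 0 < u) :
    ∫ t in Ioi u, exp (-t ^ 2 / 2) ≤ exp (-u ^ 2 / 2) / u :=
  calc ∫ t in Ioi u, exp (-t ^ 2 / 2)
      ≤ ∫ t in Ioi u, u⁻¹ * (t * exp (-t ^ 2 / 2)) := by
        refine setIntegral_mono_on (integrableOn_exp_neg_sq_div_two _)
          ((integrableOn_Ioi_mul_exp_neg_sq_div_two hu.le).const_mul _) measurableSet_Ioi
          fun t ht => ?_
        rw [← mul_assoc, inv_mul_eq_div]
        exact le_mul_of_one_le_left (exp_pos _).le ((one_le_div hu).mpr (le_of_lt ht))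
    _ = exp (-u ^ 2 / 2) / u := by
        rw [integral_const_mul, integral_Ioi_mul_exp_neg_sq_div_two hu.le, inv_mul_eq_div]

lemma Qfun_nonneg (u : ℝ) : 0 ≤ Qfun u :=
  mul_nonneg (by positivity) (setIntegral_nonneg measurableSet_Ioi fun t _ => (exp_pos _).le)

lemma Qfun_antitone : Antitone Qfun := fun u v huv =>
  mul_le_mul_of_nonneg_left
    (setIntegral_mono_set (integrableOn_exp_neg_sq_div_two _)
      (.of_forall fun _ => (exp_pos _).le) (.of_forall (Ioi_subset_Ioi huv)))
    (by positivity)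

@[fun_prop]
lemma measurable_Qfun : Measurable Qfun :=
  Qfun_antitone.measurable

lemma Qfun_le_exp_div {u : ℝ} (hu : 0 < u) :
    Qfun u ≤ exp (-u ^ 2 / 2) / (u * √(2 * π)) := by
  calc Qfun u ≤ (√(2 * π))⁻¹ * (exp (-u ^ 2 / 2) / u) :=
        mul_le_mul_of_nonneg_left (integral_Ioi_exp_neg_sq_div_two_le hu) (by positivity)
    _ = exp (-u ^ 2 / 2) / (u * √(2 * π)) := by ring

lemma Qfun_le_inv {u : ℝ} (hu : 0 < u) : Qfun u ≤ (u * √(2 * π))⁻¹ := by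
  refine (Qfun_le_exp_div hu).trans ?_
  rw [inv_eq_one_div]
  gcongr
  exact exp_le_one_iff.mpr (by nlinarith [sq_nonneg u])

lemma mul_Qfun_mul_sqrt_div_le {a b s m : ℝ} (ha : 0 ≤ a) (hb : 0 < b) (hs : 0 < s)
    (hm : 0 < m) : a * Qfun (b * √(s / m)) ≤ a / (b * √s * √(2 * π)) * √m := by
  have hu : 0 < b * √(s / m) := by positivity
  calc a * Qfun (b * √(s / m)) ≤ a * (b * √(s / m) * √(2 * π))⁻¹ :=
        mul_le_mul_of_nonneg_left (Qfun_le_inv hu) ha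
    _ = a / (b * √s * √(2 * π)) * √m := by
        rw [sqrt_div hs.le]
        field_simp

section Jensen

variable {α : Type*} [MeasurableSpace α] {μ : Measure α} {g : α → ℝ}

lemma MeasureTheory.Integrable.sqrt [IsFiniteMeasure μ] (hg : Integrable g μ) :
    Integrable (fun x => √(g x)) μ := by
  refine ((integrable_const 1).add hg.abs).mono'
    (continuous_sqrt.comp_aestronglyMeasurable hg.aestronglyMeasurable) (.of_forall fun x => ?_)
  rw [norm_of_nonneg (sqrt_nonneg _), sqrt_le_iff]
  show 0 ≤ 1 + |g x| ∧ g x ≤ (1 + |g x|) ^ 2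
  exact ⟨by positivity, by nlinarith [abs_nonneg (g x), le_abs_self (g x)]⟩

lemma integral_sqrt_le_sqrt_integral [IsProbabilityMeasure μ] (hg_nonneg : 0 ≤ᵐ[μ] g)
    (hg : Integrable g μ) : ∫ x, √(g x) ∂μ ≤ √(∫ x, g x ∂μ) :=
  strictConcaveOn_sqrt.concaveOn.le_map_integral continuous_sqrt.continuousOn isClosed_Ici
    hg_nonneg hg hg.sqrt

end Jensen

section Mdc

variable {B : ℕ} {x f : Fin B → ℂ} {σx2 σw2 : ℝ}

lemma nsq_pos_s17 (hf : f ≠ 0) : 0 < nsq f := by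
  obtain ⟨i, hi⟩ := Function.ne_iff.mp hf
  exact Finset.sum_pos' (fun j _ => Complex.normSq_nonneg _)
    ⟨i, Finset.mem_univ i, Complex.normSq_pos.mpr hi⟩

lemma Mdc_pos (hσx : 0 ≤ σx2) (hσw : 0 < σw2) (hf : f ≠ 0) (h : ℂ) :
    0 < Mdc σx2 σw2 h x f := by
  have hN := mul_pos hσw (nsq_pos_s17 hf)
  have hP : 0 ≤ Complex.normSq h * Complex.normSq (phi x f - 1) :=
    mul_nonneg (Complex.normSq_nonneg _) (Complex.normSq_nonneg _)
  have hQ : 0 ≤ Complex.normSq h * Complex.normSq (phi x f) :=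
    mul_nonneg (Complex.normSq_nonneg _) (Complex.normSq_nonneg _)
  exact div_pos (by nlinarith [mul_nonneg hσx (add_nonneg hP hN.le)]) (by linarith)

lemma Mdc_le (hσx : 0 ≤ σx2) (hσw : 0 < σw2) (hf : f ≠ 0) (h : ℂ) :
    Mdc σx2 σw2 h x f ≤
      (σx2 * (Complex.normSq h * Complex.normSq (phi x f - 1) + σw2 * nsq f) + σw2) /
        (σw2 * nsq f) := by
  have hN := mul_pos hσw (nsq_pos_s17 hf)
  unfold Mdc
  gcongr
  · have hP := mul_nonneg (Complex.normSq_nonneg h) (Complex.normSq_nonneg (phi x f - 1))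
    nlinarith [mul_nonneg hσx (add_nonneg hP hN.le)]
  · exact le_add_of_nonneg_left
      (mul_nonneg (Complex.normSq_nonneg _) (Complex.normSq_nonneg _))

@[fun_prop]
lemma measurable_Mdc : Measurable fun h : ℂ => Mdc σx2 σw2 h x f := by
  unfold Mdc
  fun_prop

lemma integrable_Mdc {μ : Measure ℂ} [IsFiniteMeasure μ]
    (hσx : 0 ≤ σx2) (hσw : 0 < σw2) (hf : f ≠ 0)
    (hmom : Integrable (fun h : ℂ => Complex.normSq h) μ) :
    Integrable (fun h => Mdc σx2 σw2 h x f) μ := by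
  refine Integrable.mono' (g := fun h =>
      (σx2 * (Complex.normSq h * Complex.normSq (phi x f - 1) + σw2 * nsq f) + σw2) /
        (σw2 * nsq f))
    (((((hmom.mul_const _).add (integrable_const _)).const_mul σx2).add
      (integrable_const σw2)).div_const (σw2 * nsq f))
    measurable_Mdc.aestronglyMeasurable (.of_forall fun h => ?_)
  rw [norm_of_nonneg (Mdc_pos hσx hσw hf h).le]
  exact Mdc_le hσx hσw hf h

end Mdc

theorem average_zeroth_order_pe_upper_bound_general
    (B : ℕ) (x : Fin B → ℂ)
    (σx2 σw2 : ℝ) (hσx : 0 < σx2) (hσw : 0 < σw2)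
    (a b : ℝ) (ha : 0 < a) (hb : 0 < b)
    (f : Fin B → ℂ) (hf : f ≠ 0)
    (μ : Measure ℂ) [IsProbabilityMeasure μ]
    (hmom : Integrable (fun h : ℂ => Complex.normSq h) μ) :
    (∫ h, a * Qfun (b * Real.sqrt (σx2 / Mdc σx2 σw2 h x f)) ∂μ) ≤
      a / (b * Real.sqrt σx2 * Real.sqrt (2 * Real.pi)) *
        Real.sqrt (∫ h, Mdc σx2 σw2 h x f ∂μ) := by
  set C := a / (b * √σx2 * √(2 * π))
  have hM_pos := Mdc_pos (x := x) hσx.le hσw hf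
  have hM_int : Integrable (fun h => Mdc σx2 σw2 h x f) μ := integrable_Mdc hσx.le hσw hf hmom
  have hbound (h : ℂ) : a * Qfun (b * √(σx2 / Mdc σx2 σw2 h x f)) ≤ C * √(Mdc σx2 σw2 h x f) :=
    mul_Qfun_mul_sqrt_div_le ha.le hb hσx (hM_pos h)
  have hlhs_int : Integrable (fun h => a * Qfun (b * √(σx2 / Mdc σx2 σw2 h x f))) μ :=
    (hM_int.sqrt.const_mul C).mono' (by fun_prop : Measurable _).aestronglyMeasurable
      (.of_forall fun h => by
        rw [norm_of_nonneg (mul_nonneg ha.le (Qfun_nonneg _))]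
        exact hbound h)
  calc ∫ h, a * Qfun (b * √(σx2 / Mdc σx2 σw2 h x f)) ∂μ
      ≤ ∫ h, C * √(Mdc σx2 σw2 h x f) ∂μ :=
        integral_mono hlhs_int (hM_int.sqrt.const_mul C) hbound
    _ = C * ∫ h, √(Mdc σx2 σw2 h x f) ∂μ := integral_const_mul C _
    _ ≤ C * √(∫ h, Mdc σx2 σw2 h x f ∂μ) :=
        mul_le_mul_of_nonneg_left
          (integral_sqrt_le_sqrt_integral (.of_forall fun h => (hM_pos h).le) hM_int)
          (by positivity)

/-- The upper bound on the average zeroth-order error probability obtained by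
combining the Gaussian tail bound `Q(u) < e^{−u²/2}/(u√(2π))` with Jensen's
inequality for the concave square root:
`∫ a·Q(b·√(σx²/M_dc(f,h))) dμ(h) ≤ (a/(b·√σx²·√(2π)))·√(∫ M_dc(f,h) dμ(h))`. -/
theorem average_zeroth_order_pe_upper_bound
    (B : ℕ) (hB : 1 ≤ B) (x : Fin B → ℂ) (hx : x ≠ 0)
    (σx2 σw2 : ℝ) (hσx : 0 < σx2) (hσw : 0 < σw2)
    (a b : ℝ) (ha : 0 < a) (hb : 0 < b)
    (f : Fin B → ℂ) (hf : f ≠ 0)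
    (μ : Measure ℂ) [IsProbabilityMeasure μ]
    (hmom : Integrable (fun h : ℂ => Complex.normSq h) μ) :
    (∫ h, a * Qfun (b * Real.sqrt (σx2 / Mdc σx2 σw2 h x f)) ∂μ) ≤
      a / (b * Real.sqrt σx2 * Real.sqrt (2 * Real.pi)) *
        Real.sqrt (∫ h, Mdc σx2 σw2 h x f ∂μ) :=
  average_zeroth_order_pe_upper_bound_general B x σx2 σw2 hσx hσw a b ha hb f hf μ hmom
end
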